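/- arXiv:2012.06762 — 2 statements merged into one kernel-verified Lean document; each statement's English description precedes it below -/
import Mathlib

section
/- In the same setting, if the working models satisfy ḡ*=g*, ρ̄=ρ, and h̄*=h* (with arbitrary misspecified π̄), then E[φ̃(O;θ, π̄, g*, ρ, h*)] = 0 (robustness under model M3). Concretely, E(φ̃|A,X)=0 a.s. when g*, ρ, h* are correct, for any function π̄ of X. -/
/-!
The outcome and mediator equations give `E[Y - θ₁M - θ₂A - g* | M,A,X,U] = g - g*` and
`E[M - θ₃A - h* | A,X,U] = h - h*`; by the tower property and pulling out known factors,
`E[(M - θ₃A - h*)(Y - θ₁M - θ₂A - g*) - ρ | A,X,U] = (g - g*)(h - h*) - ρ`. Each right-hand side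
is a function of `(X,U)` with conditional mean zero given `X`, and because `A ⊥ U | X`,
conditioning a function of `(X,U)` on `(A,X)` is the same as conditioning it on `X`. Hence every
component of `φ̃` has conditional mean zero given `(A,X)`, and the weight `A - π̄(X)`, a function
of `(A,X)`, pulls out whatever `π̄` is.

The conditional-independence step is checked on the π-system of sets `a ∩ c` with `a ∈ σ(A)`,
`c ∈ σ(X)`: there `∫_{a ∩ c} f = ∫_c P(a | X,U) f`, and conditional independence says
`P(a | X,U) = P(a | X)`.
-/

open MeasureTheory ProbabilityTheory Set

section PiSystem

variable {Ω : Type*}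

theorem isPiSystem_image2_inter {S T : Set (Set Ω)} (hS : IsPiSystem S) (hT : IsPiSystem T) :
    IsPiSystem (image2 (· ∩ ·) S T) := by
  rintro _ ⟨s, hs, t, ht, rfl⟩ _ ⟨s', hs', t', ht', rfl⟩ hne
  refine ⟨s ∩ s', hS s hs s' hs' ?_, t ∩ t', hT t ht t' ht' ?_, inter_inter_inter_comm s s' t t'⟩
  · exact hne.mono fun ω hω => ⟨hω.1.1, hω.2.1⟩
  · exact hne.mono fun ω hω => ⟨hω.1.2, hω.2.2⟩

theorem MeasurableSpace.generateFrom_image2_inter (m₁ m₂ : MeasurableSpace Ω) :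
    generateFrom (image2 (· ∩ ·) {s | MeasurableSet[m₁] s} {s | MeasurableSet[m₂] s})
      = m₁ ⊔ m₂ := by
  refine le_antisymm (generateFrom_le ?_) (sup_le (fun s hs => ?_) (fun s hs => ?_))
  · rintro _ ⟨s, hs, t, ht, rfl⟩
    exact (le_sup_left (b := m₂) s hs).inter (le_sup_right (a := m₁) t ht)
  · exact measurableSet_generateFrom ⟨s, hs, univ, .univ, inter_univ s⟩
  · exact measurableSet_generateFrom ⟨univ, .univ, s, hs, univ_inter s⟩

end PiSystem

namespace MeasureTheory

variable {Ω : Type*} {m mΩ : MeasurableSpace Ω} {μ : Measure Ω}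

theorem setIntegral_eq_setIntegral_of_isPiSystem {E : Type*} [NormedAddCommGroup E]
    [NormedSpace ℝ E] {S : Set (Set Ω)} (h_gen : m = MeasurableSpace.generateFrom S)
    (hS : IsPiSystem S) (h_univ : univ ∈ S) (hm : m ≤ mΩ) {f g : Ω → E}
    (hf : Integrable f μ) (hg : Integrable g μ)
    (h_basic : ∀ s ∈ S, ∫ x in s, f x ∂μ = ∫ x in s, g x ∂μ) {s : Set Ω}
    (hs : MeasurableSet[m] s) : ∫ x in s, f x ∂μ = ∫ x in s, g x ∂μ := by
  induction s, hs using MeasurableSpace.induction_on_inter h_gen hS with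
  | empty => simp
  | basic t ht => exact h_basic t ht
  | compl t ht iht =>
    have hfg := h_basic univ h_univ
    rw [Measure.restrict_univ] at hfg
    rw [eq_sub_of_add_eq' (integral_add_compl (hm t ht) hf),
      eq_sub_of_add_eq' (integral_add_compl (hm t ht) hg), iht, hfg]
  | iUnion t htd htm iht =>
    rw [integral_iUnion (fun i => hm _ (htm i)) htd hf.integrableOn,
      integral_iUnion (fun i => hm _ (htm i)) htd hg.integrableOn]
    exact tsum_congr iht

theorem setIntegral_inter_eq_setIntegral_condExp_indicator_mul [IsFiniteMeasure μ]
    (hm : m ≤ mΩ) {c s : Set Ω} (hc : MeasurableSet[m] c) (hs : MeasurableSet s) {f : Ω → ℝ}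
    (hf : StronglyMeasurable[m] f) (hfi : Integrable f μ) :
    ∫ ω in c ∩ s, f ω ∂μ = ∫ ω in c, (μ⟦s | m⟧ * f) ω ∂μ := by
  have h_ind : s.indicator f = s.indicator (fun _ => (1 : ℝ)) * f := by
    ext ω; by_cases hω : ω ∈ s <;> simp [hω]
  rw [← setIntegral_indicator hs, ← setIntegral_condExp hm (hfi.indicator hs) hc]
  refine setIntegral_congr_ae (hm c hc) ?_
  filter_upwards [condExp_mul_of_stronglyMeasurable_right hf (h_ind ▸ hfi.indicator hs)
    ((integrable_const (1 : ℝ)).indicator hs)] with ω hω _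
  rw [h_ind, hω]

theorem condExp_sub_condExp_ae_eq_zero (hm : m ≤ mΩ) [SigmaFinite (μ.trim hm)] {f : Ω → ℝ}
    (hf : Integrable f μ) : μ[f - μ[f | m] | m] =ᵐ[μ] 0 := by
  filter_upwards [condExp_sub hf integrable_condExp m] with ω hω
  rw [hω, condExp_of_stronglyMeasurable hm stronglyMeasurable_condExp integrable_condExp]
  simp

theorem condExp_sub_ae_eq_of_stronglyMeasurable (hm : m ≤ mΩ) [SigmaFinite (μ.trim hm)]
    {f g : Ω → ℝ} (hf : Integrable f μ) (hg : StronglyMeasurable[m] g) (hgi : Integrable g μ) :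
    μ[f - g | m] =ᵐ[μ] μ[f | m] - g := by
  simpa only [condExp_of_stronglyMeasurable hm hg hgi] using condExp_sub hf hgi m

theorem condExp_mul_ae_eq_of_condExp_ae_eq {𝓕 𝓖 : MeasurableSpace Ω} (h𝓕𝓖 : 𝓕 ≤ 𝓖)
    (h𝓖 : 𝓖 ≤ mΩ) [IsFiniteMeasure μ] {a b a' b' : Ω → ℝ} (ha : StronglyMeasurable[𝓖] a)
    (hb' : StronglyMeasurable[𝓕] b') (ha2 : MemLp a 2 μ) (hb2 : MemLp b 2 μ)
    (hb'2 : MemLp b' 2 μ) (hb_eq : μ[b | 𝓖] =ᵐ[μ] b') (ha_eq : μ[a | 𝓕] =ᵐ[μ] a') :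
    μ[a * b | 𝓕] =ᵐ[μ] a' * b' :=
  calc μ[a * b | 𝓕] =ᵐ[μ] μ[μ[a * b | 𝓖] | 𝓕] := (condExp_condExp_of_le h𝓕𝓖 h𝓖).symm
    _ =ᵐ[μ] μ[a * b' | 𝓕] := condExp_congr_ae <|
      (condExp_mul_of_stronglyMeasurable_left ha (ha2.integrable_mul hb2)
        (hb2.integrable one_le_two)).trans (Filter.EventuallyEq.rfl.mul hb_eq)
    _ =ᵐ[μ] μ[a | 𝓕] * b' := condExp_mul_of_stronglyMeasurable_right hb'
        (ha2.integrable_mul hb'2) (ha2.integrable one_le_two)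
    _ =ᵐ[μ] a' * b' := ha_eq.mul Filter.EventuallyEq.rfl

theorem condExp_sub_sub_ae_eq_of_condExp_ae_eq_add (hm : m ≤ mΩ) [SigmaFinite (μ.trim hm)]
    {Y L G Gc : Ω → ℝ} (hY : Integrable Y μ) (hL : StronglyMeasurable[m] L)
    (hLi : Integrable L μ) (hGc : StronglyMeasurable[m] Gc) (hGci : Integrable Gc μ)
    (h : μ[Y | m] =ᵐ[μ] L + G) : μ[Y - L - Gc | m] =ᵐ[μ] G - Gc := by
  rw [sub_sub]
  filter_upwards [condExp_sub_ae_eq_of_stronglyMeasurable hm hY (hL.add hGc) (hLi.add hGci), h]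
    with ω h1 h2
  simp only [h1, h2, Pi.add_apply, Pi.sub_apply]
  ring

theorem condExp_sub_mul_sub_mul_sub_ae_eq (hm : m ≤ mΩ) [SigmaFinite (μ.trim hm)]
    {Y M A G Gc : Ω → ℝ} {θ₁ θ₂ : ℝ} (hY : Integrable Y μ) (hM : StronglyMeasurable[m] M)
    (hMi : Integrable M μ) (hA : StronglyMeasurable[m] A) (hAi : Integrable A μ)
    (hGc : StronglyMeasurable[m] Gc) (hGci : Integrable Gc μ)
    (h : μ[Y | m] =ᵐ[μ] fun ω => θ₁ * M ω + θ₂ * A ω + G ω) :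
    μ[fun ω => Y ω - θ₁ * M ω - θ₂ * A ω - Gc ω | m] =ᵐ[μ] G - Gc := by
  have h_eq : (fun ω => Y ω - θ₁ * M ω - θ₂ * A ω - Gc ω)
      = Y - (fun ω => θ₁ * M ω + θ₂ * A ω) - Gc := by
    ext ω
    simp only [Pi.sub_apply]
    ring
  rw [h_eq]
  exact condExp_sub_sub_ae_eq_of_condExp_ae_eq_add hm hY ((hM.const_mul θ₁).add (hA.const_mul θ₂))
    ((hMi.const_mul θ₁).add (hAi.const_mul θ₂)) hGc hGci h

theorem condExp_mul_ae_eq_zero_of_ae_eq {w f f' : Ω → ℝ} (hw : StronglyMeasurable[m] w)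
    (hff' : f =ᵐ[μ] f') (hwf : Integrable (fun ω => w ω * f ω) μ) (hf' : Integrable f' μ)
    (h : μ[f' | m] =ᵐ[μ] 0) : μ[fun ω => w ω * f ω | m] =ᵐ[μ] 0 := by
  have hwff' : (fun ω => w ω * f ω) =ᵐ[μ] w * f' := hff'.mono fun ω hω => by simp [hω]
  filter_upwards [condExp_congr_ae (m := m) hwff',
    condExp_mul_of_stronglyMeasurable_left hw (hwf.congr hwff') hf', h] with ω h1 h2 h3
  simp [h1, h2, h3]

theorem integral_eq_zero_of_condExp_ae_eq_zero (hm : m ≤ mΩ) [SigmaFinite (μ.trim hm)]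
    {f : Ω → ℝ} (h : μ[f | m] =ᵐ[μ] 0) : ∫ ω, f ω ∂μ = 0 := by
  rw [← integral_condExp hm, integral_congr_ae h, Pi.zero_def, integral_zero]

end MeasureTheory

namespace ProbabilityTheory

variable {Ω : Type*} {mΩ : MeasurableSpace Ω} [StandardBorelSpace Ω] {μ : Measure Ω}
  [IsFiniteMeasure μ] {m' m₁ m₂ : MeasurableSpace Ω} {hm' : m' ≤ mΩ}

theorem CondIndep.condExp_indicator_sup_ae_eq (hm₁ : m₁ ≤ mΩ) (hm₂ : m₂ ≤ mΩ)
    (hind : CondIndep m' m₁ m₂ hm' μ) {t : Set Ω} (ht : MeasurableSet[m₁] t) :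
    (μ⟦t | m' ⊔ m₂⟧) =ᵐ[μ] μ⟦t | m'⟧ := by
  have ht_int : Integrable (t.indicator fun _ => (1 : ℝ)) μ :=
    (integrable_const (1 : ℝ)).indicator (hm₁ t ht)
  refine (ae_eq_condExp_of_forall_setIntegral_eq (sup_le hm' hm₂) ht_int
    (fun _ _ _ => integrable_condExp.integrableOn) (fun D hD _ => ?_)
    (stronglyMeasurable_condExp.mono (le_sup_left (b := m₂))).aestronglyMeasurable).symm
  refine setIntegral_eq_setIntegral_of_isPiSystem
    (MeasurableSpace.generateFrom_image2_inter m' m₂).symm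
    (isPiSystem_image2_inter (@MeasurableSpace.isPiSystem_measurableSet _ m')
      (@MeasurableSpace.isPiSystem_measurableSet _ m₂))
    ⟨univ, .univ, univ, .univ, inter_univ _⟩ (sup_le hm' hm₂) integrable_condExp ht_int ?_ hD
  rintro _ ⟨c, hc, s, hs, rfl⟩
  dsimp only
  have h_prod := (condIndep_iff m' m₁ m₂ hm' hm₁ hm₂ μ).1 hind t s ht hs
  calc ∫ ω in c ∩ s, (μ⟦t | m'⟧) ω ∂μ = ∫ ω in c, (μ⟦s | m'⟧ * μ⟦t | m'⟧) ω ∂μ :=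
        setIntegral_inter_eq_setIntegral_condExp_indicator_mul hm' hc (hm₂ s hs)
          stronglyMeasurable_condExp integrable_condExp
    _ = ∫ ω in c, (μ⟦t ∩ s | m'⟧) ω ∂μ := by
        refine setIntegral_congr_ae (hm' c hc) ?_
        filter_upwards [h_prod] with ω hω _
        rw [hω, Pi.mul_apply, Pi.mul_apply, mul_comm]
    _ = ∫ ω in c ∩ s, t.indicator (fun _ => (1 : ℝ)) ω ∂μ := by
        have hts := (hm₁ t ht).inter (hm₂ s hs)
        rw [setIntegral_condExp hm' ((integrable_const (1 : ℝ)).indicator hts) hc,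
          setIntegral_indicator hts, setIntegral_indicator (hm₁ t ht), inter_comm t s, inter_assoc]

theorem CondIndep.condExp_sup_ae_eq (hm₁ : m₁ ≤ mΩ) (hm₂ : m₂ ≤ mΩ)
    (hind : CondIndep m' m₁ m₂ hm' μ) {f : Ω → ℝ} (hf : StronglyMeasurable[m' ⊔ m₂] f) :
    μ[f | m₁ ⊔ m'] =ᵐ[μ] μ[f | m'] := by
  by_cases hfi : Integrable f μ
  swap
  · simp [condExp_of_not_integrable hfi]
  refine (ae_eq_condExp_of_forall_setIntegral_eq (sup_le hm₁ hm') hfi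
    (fun _ _ _ => integrable_condExp.integrableOn) (fun S hS _ => ?_)
    (stronglyMeasurable_condExp.mono (le_sup_right (a := m₁))).aestronglyMeasurable).symm
  refine setIntegral_eq_setIntegral_of_isPiSystem
    (MeasurableSpace.generateFrom_image2_inter m₁ m').symm
    (isPiSystem_image2_inter (@MeasurableSpace.isPiSystem_measurableSet _ m₁)
      (@MeasurableSpace.isPiSystem_measurableSet _ m'))
    ⟨univ, .univ, univ, .univ, inter_univ _⟩ (sup_le hm₁ hm') integrable_condExp hfi ?_ hS
  rintro _ ⟨t, ht, c, hc, rfl⟩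
  dsimp only
  have h_sup : μ⟦t | m'⟧ * f =ᵐ[μ] μ⟦t | m' ⊔ m₂⟧ * f :=
    (hind.condExp_indicator_sup_ae_eq hm₁ hm₂ ht).symm.mul_right
  have h_int : Integrable (μ⟦t | m'⟧ * f) μ := by
    refine hfi.bdd_mul (c := 1) (stronglyMeasurable_condExp.mono hm').aestronglyMeasurable ?_
    refine ae_bdd_abs_condExp_of_ae_bdd_abs (ae_of_all _ fun ω => ?_)
    by_cases hω : ω ∈ t <;> simp [hω]
  rw [inter_comm t c]
  calc ∫ ω in c ∩ t, μ[f | m'] ω ∂μ = ∫ ω in c, (μ⟦t | m'⟧ * μ[f | m']) ω ∂μ :=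
        setIntegral_inter_eq_setIntegral_condExp_indicator_mul hm' hc (hm₁ t ht)
          stronglyMeasurable_condExp integrable_condExp
    _ = ∫ ω in c, (μ⟦t | m'⟧ * f) ω ∂μ := by
        rw [← setIntegral_condExp hm' h_int hc]
        refine setIntegral_congr_ae (hm' c hc) ?_
        filter_upwards [condExp_mul_of_stronglyMeasurable_left stronglyMeasurable_condExp h_int
          hfi] with ω hω _
        rw [hω]
    _ = ∫ ω in c, (μ⟦t | m' ⊔ m₂⟧ * f) ω ∂μ :=
        setIntegral_congr_ae (hm' c hc) (h_sup.mono fun ω hω _ => hω)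
    _ = ∫ ω in c ∩ t, f ω ∂μ :=
        (setIntegral_inter_eq_setIntegral_condExp_indicator_mul (sup_le hm' hm₂)
          (le_sup_left (b := m₂) c hc) (hm₁ t ht) hf hfi).symm

theorem CondIndep.condExp_sup_ae_eq_zero {𝓐 𝓧 𝓤 𝓖 : MeasurableSpace Ω} {h𝓧 : 𝓧 ≤ mΩ}
    (h𝓐 : 𝓐 ≤ mΩ) (h𝓤 : 𝓤 ≤ mΩ) (hind : CondIndep 𝓧 𝓐 𝓤 h𝓧 μ) (h𝓐𝓧𝓖 : 𝓐 ⊔ 𝓧 ≤ 𝓖)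
    (h𝓖 : 𝓖 ≤ mΩ) {e P : Ω → ℝ} (hP : StronglyMeasurable[𝓧 ⊔ 𝓤] P) (hPi : Integrable P μ)
    (he : μ[e | 𝓖] =ᵐ[μ] P - μ[P | 𝓧]) : μ[e | 𝓐 ⊔ 𝓧] =ᵐ[μ] 0 :=
  calc μ[e | 𝓐 ⊔ 𝓧] =ᵐ[μ] μ[μ[e | 𝓖] | 𝓐 ⊔ 𝓧] := (condExp_condExp_of_le h𝓐𝓧𝓖 h𝓖).symm
    _ =ᵐ[μ] μ[P - μ[P | 𝓧] | 𝓐 ⊔ 𝓧] := condExp_congr_ae he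
    _ =ᵐ[μ] μ[P - μ[P | 𝓧] | 𝓧] :=
      hind.condExp_sup_ae_eq h𝓐 h𝓤 (hP.sub (stronglyMeasurable_condExp.mono le_sup_left))
    _ =ᵐ[μ] 0 := condExp_sub_condExp_ae_eq_zero h𝓧 hPi

namespace PartiallyLinearModel

variable {𝓜 𝓐 𝓧 𝓤 : MeasurableSpace Ω} {Y M A G H : Ω → ℝ} {θ₁ θ₂ θ₃ : ℝ}

theorem condExp_residuals_ae_eq_zero (h𝓜 : 𝓜 ≤ mΩ) (h𝓐 : 𝓐 ≤ mΩ) (h𝓧 : 𝓧 ≤ mΩ)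
    (h𝓤 : 𝓤 ≤ mΩ) (hind : CondIndep 𝓧 𝓐 𝓤 h𝓧 μ) (hM : StronglyMeasurable[𝓜] M)
    (hA : StronglyMeasurable[𝓐] A) (hG : StronglyMeasurable[𝓧 ⊔ 𝓤] G)
    (hH : StronglyMeasurable[𝓧 ⊔ 𝓤] H) (hY2 : MemLp Y 2 μ) (hM2 : MemLp M 2 μ)
    (hA2 : MemLp A 2 μ) (hG2 : MemLp G 2 μ) (hH2 : MemLp H 2 μ)
    (hout : μ[Y | 𝓜 ⊔ (𝓐 ⊔ (𝓧 ⊔ 𝓤))] =ᵐ[μ] fun ω => θ₁ * M ω + θ₂ * A ω + G ω)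
    (hmed : μ[M | 𝓐 ⊔ (𝓧 ⊔ 𝓤)] =ᵐ[μ] fun ω => θ₃ * A ω + H ω) :
    μ[fun ω => Y ω - θ₁ * M ω - θ₂ * A ω - μ[G | 𝓧] ω | 𝓐 ⊔ 𝓧] =ᵐ[μ] 0
    ∧ μ[fun ω => (M ω - θ₃ * A ω - μ[H | 𝓧] ω) * (Y ω - θ₁ * M ω - θ₂ * A ω - μ[G | 𝓧] ω)
        - μ[fun ω => (G ω - μ[G | 𝓧] ω) * (H ω - μ[H | 𝓧] ω) | 𝓧] ω | 𝓐 ⊔ 𝓧] =ᵐ[μ] 0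
    ∧ μ[fun ω => M ω - θ₃ * A ω - μ[H | 𝓧] ω | 𝓐 ⊔ 𝓧] =ᵐ[μ] 0 := by
  set Gc := μ[G | 𝓧]
  set Hc := μ[H | 𝓧]
  set εY : Ω → ℝ := fun ω => Y ω - θ₁ * M ω - θ₂ * A ω - Gc ω
  set εM : Ω → ℝ := fun ω => M ω - θ₃ * A ω - Hc ω
  have h𝓐𝓧𝓤 : 𝓐 ⊔ (𝓧 ⊔ 𝓤) ≤ mΩ := sup_le h𝓐 (sup_le h𝓧 h𝓤)
  have h𝓜𝓐𝓧𝓤 : 𝓜 ⊔ (𝓐 ⊔ (𝓧 ⊔ 𝓤)) ≤ mΩ := sup_le h𝓜 h𝓐𝓧𝓤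
  have hM' : StronglyMeasurable[𝓜 ⊔ (𝓐 ⊔ (𝓧 ⊔ 𝓤))] M := hM.mono le_sup_left
  have hA' : StronglyMeasurable[𝓜 ⊔ (𝓐 ⊔ (𝓧 ⊔ 𝓤))] A := hA.mono (by order)
  have hGc : StronglyMeasurable[𝓐 ⊔ (𝓧 ⊔ 𝓤)] Gc := stronglyMeasurable_condExp.mono (by order)
  have hHc : StronglyMeasurable[𝓐 ⊔ (𝓧 ⊔ 𝓤)] Hc := stronglyMeasurable_condExp.mono (by order)
  have hεY2 : MemLp εY 2 μ :=
    ((hY2.sub (hM2.const_mul θ₁)).sub (hA2.const_mul θ₂)).sub (hG2.condExp one_le_two)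
  have hεM2 : MemLp εM 2 μ := (hM2.sub (hA2.const_mul θ₃)).sub (hH2.condExp one_le_two)
  have hεYc : μ[εY | 𝓜 ⊔ (𝓐 ⊔ (𝓧 ⊔ 𝓤))] =ᵐ[μ] G - Gc :=
    condExp_sub_mul_sub_mul_sub_ae_eq h𝓜𝓐𝓧𝓤 (hY2.integrable one_le_two) hM'
      (hM2.integrable one_le_two) hA' (hA2.integrable one_le_two) (hGc.mono le_sup_right)
      integrable_condExp hout
  have hεMc : μ[εM | 𝓐 ⊔ (𝓧 ⊔ 𝓤)] =ᵐ[μ] H - Hc :=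
    condExp_sub_sub_ae_eq_of_condExp_ae_eq_add (L := fun ω => θ₃ * A ω) h𝓐𝓧𝓤
      (hM2.integrable one_le_two) ((hA.mono (le_sup_left (b := 𝓧 ⊔ 𝓤))).const_mul θ₃)
      ((hA2.integrable one_le_two).const_mul θ₃) hHc integrable_condExp hmed
  have hεMYc : μ[εM * εY | 𝓐 ⊔ (𝓧 ⊔ 𝓤)] =ᵐ[μ] (H - Hc) * (G - Gc) :=
    condExp_mul_ae_eq_of_condExp_ae_eq le_sup_right h𝓜𝓐𝓧𝓤
      ((hM'.sub (hA'.const_mul θ₃)).sub (hHc.mono le_sup_right)) ((hG.mono (by order)).sub hGc)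
      hεM2 hεY2 (hG2.sub (hG2.condExp one_le_two)) hεYc hεMc
  set P : Ω → ℝ := fun ω => (G ω - Gc ω) * (H ω - Hc ω)
  have hP : StronglyMeasurable[𝓧 ⊔ 𝓤] P :=
    (hG.sub (stronglyMeasurable_condExp.mono le_sup_left)).mul
      (hH.sub (stronglyMeasurable_condExp.mono le_sup_left))
  have hPi : Integrable P μ :=
    (hG2.sub (hG2.condExp one_le_two)).integrable_mul (hH2.sub (hH2.condExp one_le_two))
  have hWc : μ[εM * εY - μ[P | 𝓧] | 𝓐 ⊔ (𝓧 ⊔ 𝓤)] =ᵐ[μ] P - μ[P | 𝓧] := by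
    filter_upwards [condExp_sub_ae_eq_of_stronglyMeasurable (g := μ[P | 𝓧]) h𝓐𝓧𝓤
      (hεM2.integrable_mul hεY2) (stronglyMeasurable_condExp.mono (by order)) integrable_condExp,
      hεMYc] with ω h1 h2
    rw [h1, Pi.sub_apply, h2]
    simp only [P, Pi.sub_apply, Pi.mul_apply]
    ring
  exact ⟨hind.condExp_sup_ae_eq_zero h𝓐 h𝓤 (by order) h𝓜𝓐𝓧𝓤 hG (hG2.integrable one_le_two) hεYc,
    hind.condExp_sup_ae_eq_zero h𝓐 h𝓤 (by order) h𝓐𝓧𝓤 hP hPi hWc,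
    hind.condExp_sup_ae_eq_zero h𝓐 h𝓤 (by order) h𝓐𝓧𝓤 hH (hH2.integrable one_le_two) hεMc⟩

theorem condExp_weighted_residuals_ae_eq_zero (h𝓜 : 𝓜 ≤ mΩ) (h𝓐 : 𝓐 ≤ mΩ) (h𝓧 : 𝓧 ≤ mΩ)
    (h𝓤 : 𝓤 ≤ mΩ) (hind : CondIndep 𝓧 𝓐 𝓤 h𝓧 μ) (hM : StronglyMeasurable[𝓜] M)
    (hA : StronglyMeasurable[𝓐] A) (hG : StronglyMeasurable[𝓧 ⊔ 𝓤] G)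
    (hH : StronglyMeasurable[𝓧 ⊔ 𝓤] H) (hY2 : MemLp Y 2 μ) (hM2 : MemLp M 2 μ)
    (hA2 : MemLp A 2 μ) (hG2 : MemLp G 2 μ) (hH2 : MemLp H 2 μ)
    (hout : μ[Y | 𝓜 ⊔ (𝓐 ⊔ (𝓧 ⊔ 𝓤))] =ᵐ[μ] fun ω => θ₁ * M ω + θ₂ * A ω + G ω)
    (hmed : μ[M | 𝓐 ⊔ (𝓧 ⊔ 𝓤)] =ᵐ[μ] fun ω => θ₃ * A ω + H ω) {g h ρ w : Ω → ℝ}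
    (hg : g =ᵐ[μ] μ[G | 𝓧]) (hh : h =ᵐ[μ] μ[H | 𝓧])
    (hρ : ρ =ᵐ[μ] μ[fun ω => (G ω - g ω) * (H ω - h ω) | 𝓧])
    (hw : StronglyMeasurable[𝓐 ⊔ 𝓧] w)
    (hwY : Integrable (fun ω => w ω * (Y ω - θ₁ * M ω - θ₂ * A ω - g ω)) μ)
    (hwMY : Integrable (fun ω => w ω
      * ((M ω - θ₃ * A ω - h ω) * (Y ω - θ₁ * M ω - θ₂ * A ω - g ω) - ρ ω)) μ)
    (hwM : Integrable (fun ω => w ω * (M ω - θ₃ * A ω - h ω)) μ) :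
    μ[fun ω => w ω * (Y ω - θ₁ * M ω - θ₂ * A ω - g ω) | 𝓐 ⊔ 𝓧] =ᵐ[μ] 0
    ∧ μ[fun ω => w ω * ((M ω - θ₃ * A ω - h ω) * (Y ω - θ₁ * M ω - θ₂ * A ω - g ω) - ρ ω)
        | 𝓐 ⊔ 𝓧] =ᵐ[μ] 0
    ∧ μ[fun ω => w ω * (M ω - θ₃ * A ω - h ω) | 𝓐 ⊔ 𝓧] =ᵐ[μ] 0 := by
  obtain ⟨hY0, hMY0, hM0⟩ := condExp_residuals_ae_eq_zero h𝓜 h𝓐 h𝓧 h𝓤 hind hM hA hG hH hY2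
    hM2 hA2 hG2 hH2 hout hmed
  have hρ' : ρ =ᵐ[μ] μ[fun ω => (G ω - μ[G | 𝓧] ω) * (H ω - μ[H | 𝓧] ω) | 𝓧] :=
    hρ.trans <| condExp_congr_ae <| by filter_upwards [hg, hh] with ω h1 h2; rw [h1, h2]
  have hεY2 : MemLp (fun ω => Y ω - θ₁ * M ω - θ₂ * A ω - μ[G | 𝓧] ω) 2 μ :=
    ((hY2.sub (hM2.const_mul θ₁)).sub (hA2.const_mul θ₂)).sub (hG2.condExp one_le_two)
  have hεM2 : MemLp (fun ω => M ω - θ₃ * A ω - μ[H | 𝓧] ω) 2 μ :=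
    (hM2.sub (hA2.const_mul θ₃)).sub (hH2.condExp one_le_two)
  refine ⟨condExp_mul_ae_eq_zero_of_ae_eq hw ?_ hwY (hεY2.integrable one_le_two) hY0,
    condExp_mul_ae_eq_zero_of_ae_eq hw ?_ hwMY ((hεM2.integrable_mul hεY2).sub integrable_condExp)
      hMY0,
    condExp_mul_ae_eq_zero_of_ae_eq hw ?_ hwM (hεM2.integrable one_le_two) hM0⟩
  · filter_upwards [hg] with ω h1
    rw [h1]
  · filter_upwards [hg, hh, hρ'] with ω h1 h2 h3
    rw [h1, h2, h3]
    rfl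
  · filter_upwards [hh] with ω h2
    rw [h2]

end PartiallyLinearModel

end ProbabilityTheory

theorem stmt13_general {Ω 𝓧 𝓤 : Type*} {mΩ : MeasurableSpace Ω} [StandardBorelSpace Ω]
    {m𝓧 : MeasurableSpace 𝓧} {m𝓤 : MeasurableSpace 𝓤}
    (μ : Measure Ω) [IsProbabilityMeasure μ]
    (Y A M : Ω → ℝ) (X : Ω → 𝓧) (U : Ω → 𝓤)
    (hAm : Measurable A) (hMm : Measurable M)
    (hXm : Measurable X) (hUm : Measurable U)
    (hY : MemLp Y 2 μ) (hA : MemLp A 2 μ) (hM : MemLp M 2 μ)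
    (θ1 θ2 θ3 : ℝ) (g h : 𝓧 × 𝓤 → ℝ) (hg : Measurable g) (hh : Measurable h)
    (hgi : MemLp (fun ω => g (X ω, U ω)) 2 μ)
    (hhi : MemLp (fun ω => h (X ω, U ω)) 2 μ)
    (hout : μ[Y | MeasurableSpace.comap (fun ω => (M ω, A ω, X ω, U ω)) inferInstance]
        =ᵐ[μ] fun ω => θ1 * M ω + θ2 * A ω + g (X ω, U ω))
    (hmed : μ[M | MeasurableSpace.comap (fun ω => (A ω, X ω, U ω)) inferInstance]
        =ᵐ[μ] fun ω => θ3 * A ω + h (X ω, U ω))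
    (hAU : CondIndepFun (MeasurableSpace.comap X m𝓧) hXm.comap_le A U μ)
    -- correctly specified: g*(X) = E(g(X,U)|X), h*(X) = E(h(X,U)|X),
    -- ρ(X) = Cov(g(X,U),h(X,U)|X)
    (gstar hstar rhoX : Ω → ℝ)
    (hgstar : gstar =ᵐ[μ] μ[fun ω => g (X ω, U ω) | MeasurableSpace.comap X m𝓧])
    (hhstar : hstar =ᵐ[μ] μ[fun ω => h (X ω, U ω) | MeasurableSpace.comap X m𝓧])
    (hrho : rhoX =ᵐ[μ] μ[fun ω => (g (X ω, U ω) - gstar ω) * (h (X ω, U ω) - hstar ω)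
        | MeasurableSpace.comap X m𝓧])
    -- arbitrary (possibly misspecified) working model for π(X)
    (pibar : Ω → ℝ)
    (hpibarm : Measurable[MeasurableSpace.comap X m𝓧] pibar)
    (hint1 : Integrable
      (fun ω => (A ω - pibar ω) * (Y ω - θ1 * M ω - θ2 * A ω - gstar ω)) μ)
    (hint2 : Integrable
      (fun ω => (A ω - pibar ω) * ((M ω - θ3 * A ω - hstar ω)
        * (Y ω - θ1 * M ω - θ2 * A ω - gstar ω) - rhoX ω)) μ)
    (hint3 : Integrable
      (fun ω => (A ω - pibar ω) * (M ω - θ3 * A ω - hstar ω)) μ) :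
    (μ[fun ω => (A ω - pibar ω) * (Y ω - θ1 * M ω - θ2 * A ω - gstar ω)
        | MeasurableSpace.comap (fun ω => (A ω, X ω)) inferInstance] =ᵐ[μ] 0)
    ∧ (μ[fun ω => (A ω - pibar ω) * ((M ω - θ3 * A ω - hstar ω)
          * (Y ω - θ1 * M ω - θ2 * A ω - gstar ω) - rhoX ω)
        | MeasurableSpace.comap (fun ω => (A ω, X ω)) inferInstance] =ᵐ[μ] 0)
    ∧ (μ[fun ω => (A ω - pibar ω) * (M ω - θ3 * A ω - hstar ω)
        | MeasurableSpace.comap (fun ω => (A ω, X ω)) inferInstance] =ᵐ[μ] 0)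
    ∧ (∫ ω, (A ω - pibar ω) * (Y ω - θ1 * M ω - θ2 * A ω - gstar ω) ∂μ = 0)
    ∧ (∫ ω, (A ω - pibar ω) * ((M ω - θ3 * A ω - hstar ω)
        * (Y ω - θ1 * M ω - θ2 * A ω - gstar ω) - rhoX ω) ∂μ = 0)
    ∧ (∫ ω, (A ω - pibar ω) * (M ω - θ3 * A ω - hstar ω) ∂μ = 0) := by
  simp only [inferInstance, Prod.instMeasurableSpace, MeasurableSpace.comap_prodMk] at hout hmed ⊢
  have hXU : Measurable[MeasurableSpace.comap X m𝓧 ⊔ MeasurableSpace.comap U m𝓤]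
      fun ω => (X ω, U ω) :=
    ((comap_measurable X).mono le_sup_left le_rfl).prodMk
      ((comap_measurable U).mono le_sup_right le_rfl)
  have hw : StronglyMeasurable[MeasurableSpace.comap A inferInstance ⊔ MeasurableSpace.comap X m𝓧]
      fun ω => A ω - pibar ω :=
    (((comap_measurable A).mono le_sup_left le_rfl).sub
      (hpibarm.mono le_sup_right le_rfl)).stronglyMeasurable
  obtain ⟨h1, h2, h3⟩ := PartiallyLinearModel.condExp_weighted_residuals_ae_eq_zero
    hMm.comap_le hAm.comap_le hXm.comap_le hUm.comap_le
    ((condIndepFun_iff_condIndep _ _ _ _ _).1 hAU)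
    (comap_measurable M).stronglyMeasurable (comap_measurable A).stronglyMeasurable
    (hg.comp hXU).stronglyMeasurable (hh.comp hXU).stronglyMeasurable hY hM hA hgi hhi hout hmed
    hgstar hhstar hrho hw hint1 hint2 hint3
  have hAX := sup_le hAm.comap_le hXm.comap_le
  exact ⟨h1, h2, h3, integral_eq_zero_of_condExp_ae_eq_zero hAX h1,
    integral_eq_zero_of_condExp_ae_eq_zero hAX h2, integral_eq_zero_of_condExp_ae_eq_zero hAX h3⟩

/-- robustness under model M3: in the same setting, if `g*`, `ρ` and
`h*` are correctly specified while `π̄` is an arbitrary (possibly misspecified)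
function of `X`, then `E[φ̃(O;θ,π̄,g*,ρ,h*)] = 0`; concretely, each component of `φ̃`
satisfies `E(φ̃|A,X) = 0` almost surely. -/
theorem stmt13 {Ω 𝓧 𝓤 : Type*} {mΩ : MeasurableSpace Ω} [StandardBorelSpace Ω] [Nonempty Ω]
    {m𝓧 : MeasurableSpace 𝓧} {m𝓤 : MeasurableSpace 𝓤}
    (μ : Measure Ω) [IsProbabilityMeasure μ]
    (Y A M : Ω → ℝ) (X : Ω → 𝓧) (U : Ω → 𝓤)
    (hYm : Measurable Y) (hAm : Measurable A) (hMm : Measurable M)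
    (hXm : Measurable X) (hUm : Measurable U)
    (hY : MemLp Y 2 μ) (hA : MemLp A 2 μ) (hM : MemLp M 2 μ)
    (θ1 θ2 θ3 : ℝ) (g h : 𝓧 × 𝓤 → ℝ) (hg : Measurable g) (hh : Measurable h)
    (hgi : MemLp (fun ω => g (X ω, U ω)) 2 μ)
    (hhi : MemLp (fun ω => h (X ω, U ω)) 2 μ)
    (hout : μ[Y | MeasurableSpace.comap (fun ω => (M ω, A ω, X ω, U ω)) inferInstance]
        =ᵐ[μ] fun ω => θ1 * M ω + θ2 * A ω + g (X ω, U ω))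
    (hmed : μ[M | MeasurableSpace.comap (fun ω => (A ω, X ω, U ω)) inferInstance]
        =ᵐ[μ] fun ω => θ3 * A ω + h (X ω, U ω))
    (hAU : CondIndepFun (MeasurableSpace.comap X m𝓧) hXm.comap_le A U μ)
    -- correctly specified: g*(X) = E(g(X,U)|X), h*(X) = E(h(X,U)|X),
    -- ρ(X) = Cov(g(X,U),h(X,U)|X)
    (gstar hstar rhoX : Ω → ℝ)
    (hgstar : gstar =ᵐ[μ] μ[fun ω => g (X ω, U ω) | MeasurableSpace.comap X m𝓧])
    (hhstar : hstar =ᵐ[μ] μ[fun ω => h (X ω, U ω) | MeasurableSpace.comap X m𝓧])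
    (hrho : rhoX =ᵐ[μ] μ[fun ω => (g (X ω, U ω) - gstar ω) * (h (X ω, U ω) - hstar ω)
        | MeasurableSpace.comap X m𝓧])
    -- arbitrary (possibly misspecified) working model for π(X)
    (pibar : Ω → ℝ)
    (hpibarm : Measurable[MeasurableSpace.comap X m𝓧] pibar)
    (hint1 : Integrable
      (fun ω => (A ω - pibar ω) * (Y ω - θ1 * M ω - θ2 * A ω - gstar ω)) μ)
    (hint2 : Integrable
      (fun ω => (A ω - pibar ω) * ((M ω - θ3 * A ω - hstar ω)
        * (Y ω - θ1 * M ω - θ2 * A ω - gstar ω) - rhoX ω)) μ)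
    (hint3 : Integrable
      (fun ω => (A ω - pibar ω) * (M ω - θ3 * A ω - hstar ω)) μ) :
    (μ[fun ω => (A ω - pibar ω) * (Y ω - θ1 * M ω - θ2 * A ω - gstar ω)
        | MeasurableSpace.comap (fun ω => (A ω, X ω)) inferInstance] =ᵐ[μ] 0)
    ∧ (μ[fun ω => (A ω - pibar ω) * ((M ω - θ3 * A ω - hstar ω)
          * (Y ω - θ1 * M ω - θ2 * A ω - gstar ω) - rhoX ω)
        | MeasurableSpace.comap (fun ω => (A ω, X ω)) inferInstance] =ᵐ[μ] 0)
    ∧ (μ[fun ω => (A ω - pibar ω) * (M ω - θ3 * A ω - hstar ω)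
        | MeasurableSpace.comap (fun ω => (A ω, X ω)) inferInstance] =ᵐ[μ] 0)
    ∧ (∫ ω, (A ω - pibar ω) * (Y ω - θ1 * M ω - θ2 * A ω - gstar ω) ∂μ = 0)
    ∧ (∫ ω, (A ω - pibar ω) * ((M ω - θ3 * A ω - hstar ω)
        * (Y ω - θ1 * M ω - θ2 * A ω - gstar ω) - rhoX ω) ∂μ = 0)
    ∧ (∫ ω, (A ω - pibar ω) * (M ω - θ3 * A ω - hstar ω) ∂μ = 0) :=
  stmt13_general (mΩ := mΩ) (m𝓤 := m𝓤) μ Y A M X U hAm hMm hXm hUm hY hA hM θ1 θ2 θ3 g h hg hh hgi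
    hhi hout hmed hAU gstar hstar rhoX hgstar hhstar hrho pibar hpibarm hint1 hint2 hint3
end

section
/- Under the log-linear binary mediator model log P(M=1|A,X,U)=θ3·A+h(X,U) and the linear outcome model E(Y|M,A,X,U)=θ1·M+θ2·A+g(X,U), with A ⊥ U | X, one has E[M·exp(−θ3·A) | A,X] = E[exp(h(X,U))|X] =: h̃(X) almost surely, i.e. it does not depend on A. -/
open MeasureTheory ProbabilityTheory

/-! Pulling the `σ(A,X,U)`-measurable factor `exp(-θ3·A)` out of the conditional expectation turns
the mediator model into `E[M·exp(-θ3·A) | A,X,U] = exp(h(X,U))`; the integrability this needs comes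
from the same identity for Lebesgue integrals, since `μ.withDensity M` and
`μ.withDensity E[M | A,X,U]` agree on `σ(A,X,U)`. The tower property then reduces the claim to
`E[exp h(X,U) | X,A] = E[exp h(X,U) | X]`, which is conditional independence of `A` and `U`
given `X`, checked on the π-system of sets `{X ∈ B} ∩ {A ∈ C}`. -/

section CondExp

variable {Ω : Type*} {m mΩ : MeasurableSpace Ω} {μ : Measure Ω} {f g : Ω → ℝ}

lemma indicator_eq_mul_indicator_one (s : Set Ω) :
    s.indicator f = f * s.indicator fun _ => 1 := by
  ext x
  by_cases hx : x ∈ s <;> simp [hx]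

lemma integrable_of_ae_eq_zero_or_eq_one [IsFiniteMeasure μ] (hf : AEStronglyMeasurable f μ)
    (h01 : ∀ᵐ ω ∂μ, f ω = 0 ∨ f ω = 1) : Integrable f μ :=
  (integrable_const (1 : ℝ)).mono' hf (h01.mono fun ω hω => by rcases hω with hω | hω <;> simp [hω])

lemma setIntegral_inter_eq_setIntegral_mul_indicator {a b : Set Ω} (hb : MeasurableSet b) :
    ∫ ω in a ∩ b, f ω ∂μ = ∫ ω in a, f ω * b.indicator (fun _ => 1) ω ∂μ := by
  rw [← setIntegral_indicator hb, indicator_eq_mul_indicator_one]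
  rfl

lemma setIntegral_mul_condExp (hm : m ≤ mΩ) [SigmaFinite (μ.trim hm)] {s : Set Ω}
    (hs : MeasurableSet[m] s) (hg : AEStronglyMeasurable[m] g μ) (hf : Integrable f μ)
    (hgf : Integrable (g * f) μ) :
    ∫ ω in s, g ω * μ[f | m] ω ∂μ = ∫ ω in s, g ω * f ω ∂μ := by
  change _ = ∫ ω in s, (g * f) ω ∂μ
  rw [← setIntegral_condExp hm hgf hs]
  exact setIntegral_congr_ae (hm s hs)
    ((condExp_mul_of_aestronglyMeasurable_left hg hgf hf).mono fun ω h _ => h.symm)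

lemma trim_withDensity_ofReal_condExp (hm : m ≤ mΩ) [SigmaFinite (μ.trim hm)]
    (hf : Integrable f μ) (hf0 : 0 ≤ᵐ[μ] f) :
    (μ.withDensity fun ω => ENNReal.ofReal (μ[f | m] ω)).trim hm
      = (μ.withDensity fun ω => ENNReal.ofReal (f ω)).trim hm := by
  refine @Measure.ext _ m _ _ fun s hs => ?_
  rw [trim_measurableSet_eq hm hs, trim_measurableSet_eq hm hs,
    withDensity_apply _ (hm s hs), withDensity_apply _ (hm s hs),
    ← ofReal_integral_eq_lintegral_ofReal integrable_condExp.integrableOn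
      (ae_restrict_of_ae (condExp_nonneg hf0)),
    ← ofReal_integral_eq_lintegral_ofReal hf.integrableOn (ae_restrict_of_ae hf0),
    setIntegral_condExp hm hf hs]

lemma lintegral_ofReal_condExp_mul (hm : m ≤ mΩ) [SigmaFinite (μ.trim hm)]
    (hf : Integrable f μ) (hf0 : 0 ≤ᵐ[μ] f) {G : Ω → ENNReal} (hG : Measurable[m] G) :
    ∫⁻ ω, ENNReal.ofReal (μ[f | m] ω) * G ω ∂μ = ∫⁻ ω, ENNReal.ofReal (f ω) * G ω ∂μ := by
  have hG' : Measurable G := hG.mono hm le_rfl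
  calc ∫⁻ ω, ENNReal.ofReal (μ[f | m] ω) * G ω ∂μ
      = ∫⁻ ω, G ω ∂μ.withDensity fun ω => ENNReal.ofReal (μ[f | m] ω) :=
        (lintegral_withDensity_eq_lintegral_mul₀
          integrable_condExp.aemeasurable.ennreal_ofReal hG'.aemeasurable).symm
    _ = ∫⁻ ω, G ω ∂μ.withDensity fun ω => ENNReal.ofReal (f ω) := by
        rw [← lintegral_trim hm hG, ← lintegral_trim hm hG, trim_withDensity_ofReal_condExp hm hf hf0]
    _ = ∫⁻ ω, ENNReal.ofReal (f ω) * G ω ∂μ :=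
        lintegral_withDensity_eq_lintegral_mul₀ hf.aemeasurable.ennreal_ofReal hG'.aemeasurable

theorem integrable_mul_of_integrable_condExp_mul (hm : m ≤ mΩ) [SigmaFinite (μ.trim hm)]
    (hf : Integrable f μ) (hf0 : 0 ≤ᵐ[μ] f) (hg : StronglyMeasurable[m] g)
    (hfg : Integrable (μ[f | m] * g) μ) : Integrable (f * g) μ := by
  refine ⟨hf.1.mul (hg.mono hm).aestronglyMeasurable, ?_⟩
  have key := lintegral_ofReal_condExp_mul hm hf hf0 (G := fun ω => ‖g ω‖ₑ)
    (measurable_enorm.comp hg.measurable)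
  have h1 : ∫⁻ ω, ‖(f * g) ω‖ₑ ∂μ = ∫⁻ ω, ENNReal.ofReal (f ω) * ‖g ω‖ₑ ∂μ := by
    refine lintegral_congr_ae ?_
    filter_upwards [hf0] with ω hω
    rw [Pi.mul_apply, enorm_mul, Real.enorm_eq_ofReal hω]
  have h2 : ∫⁻ ω, ‖(μ[f | m] * g) ω‖ₑ ∂μ = ∫⁻ ω, ENNReal.ofReal (μ[f | m] ω) * ‖g ω‖ₑ ∂μ := by
    refine lintegral_congr_ae ?_
    filter_upwards [condExp_nonneg (m := m) hf0] with ω hω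
    rw [Pi.mul_apply, enorm_mul, Real.enorm_eq_ofReal hω]
  rw [HasFiniteIntegral, h1, ← key, ← h2]
  exact hfg.2

end CondExp

section CondIndep

variable {Ω : Type*} {m' m₁ m₂ mΩ : MeasurableSpace Ω} {μ : Measure Ω}

lemma isPiSystem_image2_inter_s15 (m₁ m₂ : MeasurableSpace Ω) :
    IsPiSystem (Set.image2 (· ∩ ·) {s | MeasurableSet[m₁] s} {s | MeasurableSet[m₂] s}) := by
  rintro _ ⟨a₁, ha₁, b₁, hb₁, rfl⟩ _ ⟨a₂, ha₂, b₂, hb₂, rfl⟩ -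
  exact ⟨a₁ ∩ a₂, ha₁.inter ha₂, b₁ ∩ b₂, hb₁.inter hb₂, Set.inter_inter_inter_comm _ _ _ _⟩

lemma sup_eq_generateFrom_image2_inter (m₁ m₂ : MeasurableSpace Ω) :
    m₁ ⊔ m₂ = MeasurableSpace.generateFrom
      (Set.image2 (· ∩ ·) {s | MeasurableSet[m₁] s} {s | MeasurableSet[m₂] s}) := by
  refine le_antisymm (sup_le (fun s hs => ?_) (fun s hs => ?_))
    (MeasurableSpace.generateFrom_le ?_)
  · exact MeasurableSpace.measurableSet_generateFrom ⟨s, hs, Set.univ, .univ, Set.inter_univ s⟩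
  · exact MeasurableSpace.measurableSet_generateFrom ⟨Set.univ, .univ, s, hs, Set.univ_inter s⟩
  · rintro _ ⟨a, ha, b, hb, rfl⟩
    exact (le_sup_left (b := m₂) a ha).inter (le_sup_right (a := m₁) b hb)

lemma ae_eq_condExp_sup_of_setIntegral_inter_eq [IsFiniteMeasure μ] (h₁ : m₁ ≤ mΩ)
    (h₂ : m₂ ≤ mΩ) {f g : Ω → ℝ} (hf : Integrable f μ) (hg : Integrable g μ)
    (hgm : AEStronglyMeasurable[m₁ ⊔ m₂] g μ)
    (h : ∀ a b, MeasurableSet[m₁] a → MeasurableSet[m₂] b →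
      ∫ ω in a ∩ b, g ω ∂μ = ∫ ω in a ∩ b, f ω ∂μ) :
    g =ᵐ[μ] μ[f | m₁ ⊔ m₂] := by
  have hle : m₁ ⊔ m₂ ≤ mΩ := sup_le h₁ h₂
  suffices key : ∀ s, MeasurableSet[m₁ ⊔ m₂] s → ∫ ω in s, g ω ∂μ = ∫ ω in s, f ω ∂μ from
    ae_eq_condExp_of_forall_setIntegral_eq hle hf (fun _ _ _ => hg.integrableOn)
      (fun s hs _ => key s hs) hgm
  intro s hs
  induction s, hs using MeasurableSpace.induction_on_inter
    (sup_eq_generateFrom_image2_inter m₁ m₂) (isPiSystem_image2_inter_s15 m₁ m₂) with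
  | empty => simp
  | basic s hs =>
    obtain ⟨a, ha, b, hb, rfl⟩ := hs
    exact h a b ha hb
  | compl t ht iht =>
    have huniv : ∫ ω, g ω ∂μ = ∫ ω, f ω ∂μ := by
      simpa using h Set.univ Set.univ .univ .univ
    rw [setIntegral_compl (hle t ht) hg, setIntegral_compl (hle t ht) hf, iht, huniv]
  | iUnion s hdisj hs ihs =>
    rw [integral_iUnion (fun i => hle _ (hs i)) hdisj hg.integrableOn,
      integral_iUnion (fun i => hle _ (hs i)) hdisj hf.integrableOn]
    exact tsum_congr ihs

variable [StandardBorelSpace Ω] [IsFiniteMeasure μ]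

lemma condExp_indicator_sup_ae_eq_of_condIndep (hm' : m' ≤ mΩ) (h₁ : m₁ ≤ mΩ)
    (h₂ : m₂ ≤ mΩ) (hind : CondIndep m' m₁ m₂ hm' μ) {t : Set Ω} (ht : MeasurableSet[m₂] t) :
    μ⟦t | m' ⊔ m₁⟧ =ᵐ[μ] μ⟦t | m'⟧ := by
  refine (ae_eq_condExp_sup_of_setIntegral_inter_eq hm' h₁
    ((integrable_const 1).indicator (h₂ t ht)) integrable_condExp
    (stronglyMeasurable_condExp.mono (le_sup_left : m' ≤ m' ⊔ m₁)).aestronglyMeasurable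
    fun a b ha hb => ?_).symm
  have hb' := h₁ b hb
  have hprod := (condIndep_iff m' m₁ m₂ hm' h₁ h₂ μ).mp hind b t hb ht
  calc ∫ ω in a ∩ b, (μ⟦t | m'⟧) ω ∂μ
      = ∫ ω in a, (μ⟦t | m'⟧) ω * b.indicator (fun _ => 1) ω ∂μ :=
        setIntegral_inter_eq_setIntegral_mul_indicator hb'
    _ = ∫ ω in a, (μ⟦t | m'⟧) ω * (μ⟦b | m'⟧) ω ∂μ := by
        refine (setIntegral_mul_condExp hm' ha stronglyMeasurable_condExp.aestronglyMeasurable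
          ((integrable_const 1).indicator hb') ?_).symm
        rw [← indicator_eq_mul_indicator_one]
        exact integrable_condExp.indicator hb'
    _ = ∫ ω in a, (μ⟦b ∩ t | m'⟧) ω ∂μ :=
        setIntegral_congr_ae (hm' a ha) (hprod.mono fun ω h _ => by rw [h, Pi.mul_apply, mul_comm])
    _ = ∫ ω in a ∩ b, t.indicator (fun _ => (1 : ℝ)) ω ∂μ := by
        rw [setIntegral_condExp hm' ((integrable_const 1).indicator (hb'.inter (h₂ t ht))) ha,
          setIntegral_indicator (hb'.inter (h₂ t ht)), setIntegral_indicator (h₂ t ht),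
          Set.inter_assoc]

theorem condExp_sup_ae_eq_of_condIndep (hm' : m' ≤ mΩ) (h₁ : m₁ ≤ mΩ) (h₂ : m₂ ≤ mΩ)
    (hind : CondIndep m' m₁ m₂ hm' μ) {Z : Ω → ℝ} (hZm : AEStronglyMeasurable[m' ⊔ m₂] Z μ)
    (hZ : Integrable Z μ) :
    μ[Z | m' ⊔ m₁] =ᵐ[μ] μ[Z | m'] := by
  refine (ae_eq_condExp_sup_of_setIntegral_inter_eq hm' h₁ hZ integrable_condExp
    (stronglyMeasurable_condExp.mono (le_sup_left : m' ≤ m' ⊔ m₁)).aestronglyMeasurable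
    fun a b ha hb => ?_).symm
  have hb' := h₁ b hb
  have hcond : μ⟦b | m' ⊔ m₂⟧ =ᵐ[μ] μ⟦b | m'⟧ :=
    condExp_indicator_sup_ae_eq_of_condIndep hm' h₂ h₁ hind.symm hb
  have hZb : Integrable (Z * b.indicator fun _ => 1) μ := by
    rw [← indicator_eq_mul_indicator_one]; exact hZ.indicator hb'
  have hpull : μ[Z * b.indicator (fun _ => 1) | m' ⊔ m₂] =ᵐ[μ] Z * μ⟦b | m' ⊔ m₂⟧ :=
    condExp_mul_of_aestronglyMeasurable_left hZm hZb ((integrable_const 1).indicator hb')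
  -- `μ⟦b | m'⟧ * Z` agrees a.e. with a conditional expectation, hence is integrable
  have hZcond : Integrable (μ⟦b | m'⟧ * Z) μ :=
    integrable_condExp.congr (hpull.trans (hcond.mono fun ω h => by simp [h, mul_comm]))
  calc ∫ ω in a ∩ b, μ[Z | m'] ω ∂μ
      = ∫ ω in a, μ[Z | m'] ω * b.indicator (fun _ => 1) ω ∂μ := setIntegral_inter_eq_setIntegral_mul_indicator hb'
    _ = ∫ ω in a, μ[Z | m'] ω * (μ⟦b | m'⟧) ω ∂μ := by
        refine (setIntegral_mul_condExp hm' ha stronglyMeasurable_condExp.aestronglyMeasurable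
          ((integrable_const 1).indicator hb') ?_).symm
        rw [← indicator_eq_mul_indicator_one]
        exact integrable_condExp.indicator hb'
    _ = ∫ ω in a, (μ⟦b | m'⟧) ω * Z ω ∂μ := by
        simp_rw [mul_comm (μ[Z | m'] _)]
        exact setIntegral_mul_condExp hm' ha stronglyMeasurable_condExp.aestronglyMeasurable
          hZ hZcond
    _ = ∫ ω in a, Z ω * (μ⟦b | m' ⊔ m₂⟧) ω ∂μ :=
        setIntegral_congr_ae (hm' a ha) (hcond.mono fun ω h _ => by rw [h, mul_comm])
    _ = ∫ ω in a, Z ω * b.indicator (fun _ => 1) ω ∂μ :=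
        (setIntegral_congr_ae (hm' a ha) (hpull.mono fun ω h _ => h.symm)).trans
          (setIntegral_condExp (sup_le hm' h₂) hZb ((le_sup_left : m' ≤ m' ⊔ m₂) a ha))
    _ = ∫ ω in a ∩ b, Z ω ∂μ := (setIntegral_inter_eq_setIntegral_mul_indicator hb').symm

end CondIndep

theorem stmt15_general {Ω 𝓧 𝓤 : Type*} {mΩ : MeasurableSpace Ω} [StandardBorelSpace Ω]
    {m𝓧 : MeasurableSpace 𝓧} {m𝓤 : MeasurableSpace 𝓤}
    (μ : Measure Ω) [IsProbabilityMeasure μ]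
    (A M : Ω → ℝ) (X : Ω → 𝓧) (U : Ω → 𝓤)
    (hAm : Measurable A) (hMm : Measurable M)
    (hXm : Measurable X) (hUm : Measurable U)
    (hMbin : ∀ᵐ ω ∂μ, M ω = 0 ∨ M ω = 1)
    (θ3 : ℝ) (h : 𝓧 × 𝓤 → ℝ) (hh : Measurable h)
    (hhi : Integrable (fun ω => Real.exp (h (X ω, U ω))) μ)
    -- log-linear mediator model: P(M=1|A,X,U) = exp(θ3·A + h(X,U))
    (hmed : μ[M | MeasurableSpace.comap (fun ω => (A ω, X ω, U ω)) inferInstance]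
        =ᵐ[μ] fun ω => Real.exp (θ3 * A ω + h (X ω, U ω)))
    (hAU : CondIndepFun (MeasurableSpace.comap X m𝓧) hXm.comap_le A U μ) :
    μ[fun ω => M ω * Real.exp (-θ3 * A ω)
        | MeasurableSpace.comap (fun ω => (A ω, X ω)) inferInstance]
      =ᵐ[μ] μ[fun ω => Real.exp (h (X ω, U ω)) | MeasurableSpace.comap X m𝓧] := by
  set mAXU := MeasurableSpace.comap (fun ω => (A ω, X ω, U ω)) inferInstance
  set mAX := MeasurableSpace.comap (fun ω => (A ω, X ω)) inferInstance
  set Z := fun ω => Real.exp (h (X ω, U ω))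
  have hAXU : mAXU ≤ mΩ := (hAm.prodMk (hXm.prodMk hUm)).comap_le
  have hAX : mAX ≤ mAXU :=
    Measurable.comap_le (f := fun ω => (A ω, X ω))
      ((comap_measurable (fun ω => (A ω, X ω, U ω))).fst.prodMk
        (comap_measurable (fun ω => (A ω, X ω, U ω))).snd.fst)
  have he : StronglyMeasurable[mAXU] fun ω => Real.exp (-θ3 * A ω) :=
    ((comap_measurable _).fst.const_mul _).exp.stronglyMeasurable
  have hM : Integrable M μ := integrable_of_ae_eq_zero_or_eq_one hMm.aestronglyMeasurable hMbin
  have hmed' : μ[M | mAXU] * (fun ω => Real.exp (-θ3 * A ω)) =ᵐ[μ] Z := by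
    filter_upwards [hmed] with ω hω
    rw [Pi.mul_apply, hω, ← Real.exp_add]
    exact congrArg Real.exp (by ring)
  have hMe : Integrable (fun ω => M ω * Real.exp (-θ3 * A ω)) μ :=
    integrable_mul_of_integrable_condExp_mul hAXU hM
      (hMbin.mono fun ω hω => by rcases hω with hω | hω <;> simp [hω]) he (hhi.congr hmed'.symm)
  have hZ : AEStronglyMeasurable[MeasurableSpace.comap X m𝓧 ⊔ MeasurableSpace.comap U m𝓤] Z μ :=
    (hh.comp (((comap_measurable X).mono le_sup_left le_rfl).prodMk
      ((comap_measurable U).mono le_sup_right le_rfl))).exp.aestronglyMeasurable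
  have hsup : mAX = MeasurableSpace.comap X m𝓧 ⊔ MeasurableSpace.comap A inferInstance :=
    (MeasurableSpace.comap_prodMk A X).trans (sup_comm _ _)
  calc μ[fun ω => M ω * Real.exp (-θ3 * A ω) | mAX]
      =ᵐ[μ] μ[μ[fun ω => M ω * Real.exp (-θ3 * A ω) | mAXU] | mAX] :=
        (condExp_condExp_of_le hAX hAXU).symm
    _ =ᵐ[μ] μ[Z | mAX] :=
        condExp_congr_ae ((condExp_mul_of_stronglyMeasurable_right he hMe hM).trans hmed')
    _ =ᵐ[μ] μ[Z | MeasurableSpace.comap X m𝓧] := by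
        rw [hsup]
        exact condExp_sup_ae_eq_of_condIndep hXm.comap_le hAm.comap_le hUm.comap_le
          ((condIndepFun_iff_condIndep _ _ A U μ).mp hAU) hZ hhi

/-- under the log-linear binary mediator model
`P(M=1|A,X,U) = exp(θ3·A + h(X,U))`, the linear outcome model, and `A ⊥ U | X`,
`E[M·exp(−θ3·A) | A,X] = E[exp(h(X,U))|X] =: h̃(X)` a.s., so it does not depend on `A`. -/
theorem stmt15 {Ω 𝓧 𝓤 : Type*} {mΩ : MeasurableSpace Ω} [StandardBorelSpace Ω] [Nonempty Ω]
    {m𝓧 : MeasurableSpace 𝓧} {m𝓤 : MeasurableSpace 𝓤}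
    (μ : Measure Ω) [IsProbabilityMeasure μ]
    (Y A M : Ω → ℝ) (X : Ω → 𝓧) (U : Ω → 𝓤)
    (hYm : Measurable Y) (hAm : Measurable A) (hMm : Measurable M)
    (hXm : Measurable X) (hUm : Measurable U)
    (hY : Integrable Y μ) (hA : Integrable A μ)
    (hMbin : ∀ᵐ ω ∂μ, M ω = 0 ∨ M ω = 1)
    (θ1 θ2 θ3 : ℝ) (g h : 𝓧 × 𝓤 → ℝ) (hg : Measurable g) (hh : Measurable h)
    (hgi : Integrable (fun ω => g (X ω, U ω)) μ)
    (hhi : Integrable (fun ω => Real.exp (h (X ω, U ω))) μ)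
    (hout : μ[Y | MeasurableSpace.comap (fun ω => (M ω, A ω, X ω, U ω)) inferInstance]
        =ᵐ[μ] fun ω => θ1 * M ω + θ2 * A ω + g (X ω, U ω))
    -- log-linear mediator model: P(M=1|A,X,U) = exp(θ3·A + h(X,U))
    (hmed : μ[M | MeasurableSpace.comap (fun ω => (A ω, X ω, U ω)) inferInstance]
        =ᵐ[μ] fun ω => Real.exp (θ3 * A ω + h (X ω, U ω)))
    (hAU : CondIndepFun (MeasurableSpace.comap X m𝓧) hXm.comap_le A U μ) :
    μ[fun ω => M ω * Real.exp (-θ3 * A ω)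
        | MeasurableSpace.comap (fun ω => (A ω, X ω)) inferInstance]
      =ᵐ[μ] μ[fun ω => Real.exp (h (X ω, U ω)) | MeasurableSpace.comap X m𝓧] :=
  stmt15_general (mΩ := mΩ) (m𝓤 := m𝓤) μ A M X U hAm hMm hXm hUm hMbin θ3 h hh hhi hmed hAU
end
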